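/- Let a = a₁a₂… be an aperiodic infinite word that is a fixed point of a morphism σ over a finite alphabet A, prolongable on its first letter, and let M = max{|σ(i)| : i ∈ A}. Then the Diophantine exponent of a satisfies dio(a) ≤ M + 1. -/

import Mathlib

/-!
If a prefix `U V^α` of `u` has length `L ≥ (M + 1)(|U| + |V|)`, then `u` has period `|V|` on
positions `[|U|, L)`. Applying `σ` to this prefix gives a strictly longer prefix of `u` (a fixed
point of a prolongable morphism), which has period `|σ(V)| ≤ M|V|` from position
`|σ(U)| ≤ M|U|`. The length bound makes the two periodic ranges overlap on at least `|V|`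
positions, so the period `|V|` extends to the longer range. Iterating, `u` is eventually
periodic.
-/

/-- `w` is a prefix of the infinite word `a`. -/
def IsPrefOf {A : Type*} (w : List A) (a : ℕ → A) : Prop :=
  ∀ i : Fin w.length, w.get i = a i

/-- Fractional power `V^α`: `V^⌊α⌋` followed by the prefix of `V`
of length `⌈{α}·|V|⌉`. -/
noncomputable def fracPow {A : Type*} (V : List A) (α : ℝ) : List A :=
  (List.replicate ⌊α⌋₊ V).flatten ++ V.take ⌈Int.fract α * V.length⌉₊

/-- The set of admissible exponents in the definition of the Diophantine exponent. -/
def dioSet {A : Type*} (a : ℕ → A) : Set ℝ :=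
  {ρ | ∀ N : ℕ, ∃ (U V : List A) (α : ℝ), V ≠ [] ∧ 1 ≤ α ∧
    IsPrefOf (U ++ fracPow V α) a ∧ N ≤ (U ++ fracPow V α).length ∧
    ρ ≤ ((U ++ fracPow V α).length : ℝ) / ((U.length : ℝ) + (V.length : ℝ))}

/-- Diophantine exponent of an infinite word. -/
noncomputable def dio {A : Type*} (a : ℕ → A) : EReal :=
  sSup ((fun ρ : ℝ => (ρ : EReal)) '' dioSet a)

/-- Action of a morphism (given by its values on letters) on a finite word. -/
def mapW {A : Type*} (σ : A → List A) (w : List A) : List A := w.flatMap σ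

/-- `n`-th iterate of a morphism applied to a word. -/
def iterW {A : Type*} (σ : A → List A) (n : ℕ) (w : List A) : List A :=
  (mapW σ)^[n] w

/-- `σ` is prolongable on the letter `a`. -/
def Prolongable {A : Type*} (σ : A → List A) (a : A) : Prop :=
  (∃ W : List A, W ≠ [] ∧ σ a = a :: W) ∧
  Filter.Tendsto (fun n => (iterW σ n [a]).length) Filter.atTop Filter.atTop

/-- The letter `b` has maximal growth for `σ`. -/
def MaxGrowth {A : Type*} (σ : A → List A) (b : A) : Prop :=
  ∃ C : ℝ, ∀ c : A, ∀ n : ℕ, 1 ≤ n →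
    ((iterW σ n [c]).length : ℝ) < C * ((iterW σ n [b]).length : ℝ)

/-- Incidence matrix of a morphism, viewed over `ℂ`. -/
noncomputable def incMat {A : Type*} [Fintype A] [DecidableEq A]
    (σ : A → List A) : Matrix A A ℂ :=
  fun i j => ((σ j).count i : ℂ)

/-- Spectral radius of the incidence matrix of a morphism. -/
noncomputable def specRad {A : Type*} [Fintype A] [DecidableEq A]
    (σ : A → List A) : ℝ :=
  sSup ((fun μ : ℂ => ‖μ‖) '' spectrum ℂ (incMat σ))

section Prefixes

variable {A : Type*} {u : ℕ → A} {w v : List A}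

theorem isPrefOf_iff : IsPrefOf w u ↔ ∀ j (h : j < w.length), w[j] = u j :=
  ⟨fun h j hj => h ⟨j, hj⟩, fun h i => h i.1 i.2⟩

theorem isPrefOf_ofFn (u : ℕ → A) (n : ℕ) : IsPrefOf (List.ofFn fun i : Fin n => u i) u :=
  isPrefOf_iff.2 fun _ _ => List.getElem_ofFn ..

theorem IsPrefOf.of_prefix (hv : IsPrefOf v u) (h : w <+: v) : IsPrefOf w u :=
  isPrefOf_iff.2 fun j hj => by rw [h.getElem hj, isPrefOf_iff.1 hv]

theorem IsPrefOf.prefix_of_length_le (hw : IsPrefOf w u) (hv : IsPrefOf v u)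
    (h : w.length ≤ v.length) : w <+: v :=
  List.prefix_iff_getElem.2 ⟨h, fun j hj => by rw [isPrefOf_iff.1 hw, isPrefOf_iff.1 hv]⟩

end Prefixes

section Morphisms

variable {A : Type*} (σ : A → List A) {w v : List A}

theorem mapW_append : mapW σ (w ++ v) = mapW σ w ++ mapW σ v := List.flatMap_append

theorem mapW_prefix (h : w <+: v) : mapW σ w <+: mapW σ v := h.flatMap σ

theorem mapW_eq_nil_of_subset (h : w ⊆ v) (hv : mapW σ v = []) : mapW σ w = [] :=
  List.flatMap_eq_nil_iff.2 fun a ha => List.flatMap_eq_nil_iff.1 hv a (h ha)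

theorem length_mapW_le {M : ℕ} (hM : ∀ c, (σ c).length ≤ M) (w : List A) :
    (mapW σ w).length ≤ M * w.length := by
  induction w with
  | nil => simp [mapW]
  | cons c w ih =>
    simp only [mapW, List.flatMap_cons, List.length_append, List.length_cons] at ih ⊢
    nlinarith [hM c]

theorem iterW_succ (n : ℕ) (w : List A) : iterW σ (n + 1) w = mapW σ (iterW σ n w) :=
  Function.iterate_succ_apply' (mapW σ) n w

end Morphisms

section FixedPoint

variable {A : Type*} {σ : A → List A} {u : ℕ → A} {w : List A}
  (hpro : Prolongable σ (u 0)) (hfix : ∀ n, IsPrefOf (iterW σ n [u 0]) u)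
include hpro hfix

theorem isPrefOf_mapW (hw : IsPrefOf w u) : IsPrefOf (mapW σ w) u := by
  obtain ⟨n, hn⟩ := (hpro.2.eventually_ge_atTop w.length).exists
  have hwn : w <+: iterW σ n [u 0] := hw.prefix_of_length_le (hfix n) hn
  exact (hfix (n + 1)).of_prefix (iterW_succ σ n _ ▸ mapW_prefix σ hwn)

theorem length_lt_length_mapW (hw : IsPrefOf w u) (hne : w ≠ []) :
    w.length < (mapW σ w).length := by
  by_contra! hle
  have hσw : mapW σ w <+: w := (isPrefOf_mapW hpro hfix hw).prefix_of_length_le hw hle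
  have hu0 : [u 0] <+: w := by
    obtain ⟨c, w', rfl⟩ := List.exists_cons_of_ne_nil hne
    have hc : c = u 0 := isPrefOf_iff.1 hw 0 (by simp)
    simp [hc]
  have hiter : ∀ k, iterW σ k [u 0] <+: w := by
    intro k
    induction k with
    | zero => exact hu0
    | succ k ih => exact iterW_succ σ k _ ▸ (mapW_prefix σ ih).trans hσw
  obtain ⟨k, hk⟩ := (hpro.2.eventually_gt_atTop w.length).exists
  exact (hiter k).length_le.not_gt hk

theorem length_le_length_mapW (hw : IsPrefOf w u) :
    w.length ≤ (mapW σ w).length := by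
  rcases eq_or_ne w [] with rfl | hne
  · simp
  · exact (length_lt_length_mapW hpro hfix hw hne).le

end FixedPoint

section Periods

variable {A : Type*}

def HasPeriodOn (u : ℕ → A) (m p L : ℕ) : Prop :=
  ∀ i, m ≤ i → i + p < L → u (i + p) = u i

variable {u : ℕ → A}

theorem hasPeriodOn_of_isPrefOf {X Y T : List A} (hpref : IsPrefOf (X ++ (Y ++ T)) u)
    (hT : T <+: Y ++ T) :
    HasPeriodOn u X.length Y.length (X.length + (Y.length + T.length)) := by
  intro i hi hiL
  have hk : i - X.length < T.length := by omega
  have hshift : u (i + Y.length) = T[i - X.length] := by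
    rw [← isPrefOf_iff.1 hpref (i + Y.length) (by simp; omega),
      List.getElem_append_right (by omega), List.getElem_append_right (by omega)]
    congr 1
    omega
  have hbase : u i = T[i - X.length] := by
    rw [← isPrefOf_iff.1 hpref i (by simp; omega), List.getElem_append_right (by omega),
      hT.getElem hk]
  rw [hshift, hbase]

theorem HasPeriodOn.exists_split {m p L : ℕ} (per : HasPeriodOn u m p L) (h : m + p ≤ L) :
    ∃ X Y T : List A, IsPrefOf (X ++ (Y ++ T)) u ∧ X.length = m ∧ Y.length = p ∧
      X.length + (Y.length + T.length) = L ∧ T <+: Y ++ T := by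
  set W := List.ofFn fun i : Fin L => u i
  refine ⟨W.take m, (W.drop m).take p, (W.drop m).drop p, ?_, by simp [W]; omega,
    by simp [W]; omega, by simp [W]; omega, ?_⟩
  · simpa only [List.take_append_drop] using isPrefOf_ofFn u L
  · rw [List.take_append_drop, List.prefix_iff_getElem]
    refine ⟨(List.drop_sublist _ _).length_le, fun j hj => ?_⟩
    simp only [List.length_drop, List.length_ofFn, W] at hj
    simp only [List.getElem_drop, List.getElem_ofFn, W]
    rw [← per (m + j) (by omega) (by omega)]
    congr 1
    omega

theorem subset_of_prefix_append {Y T : List A} (hY : Y ≠ []) (h : T <+: Y ++ T) : T ⊆ Y := by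
  have key : ∀ j (hj : j < T.length), T[j] ∈ Y := by
    intro j
    induction j using Nat.strong_induction_on with
    | _ j ih =>
      intro hj
      rw [h.getElem hj]
      by_cases hjY : j < Y.length
      · rw [List.getElem_append_left hjY]
        exact List.getElem_mem _
      · rw [List.getElem_append_right (by omega)]
        exact ih _ (by have := List.length_pos_iff.2 hY; omega) _
  intro a ha
  obtain ⟨j, hj, rfl⟩ := List.mem_iff_getElem.1 ha
  exact key j hj

-- Positions `i ≥ L` are pulled back by the second period `p'` into the range of the first.
theorem HasPeriodOn.extend {m p m' p' L L' : ℕ} (per : HasPeriodOn u m p L)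
    (per' : HasPeriodOn u m' p' L') (hp' : 0 < p') (hm : m ≤ m') (hL : m' + p' + p ≤ L) :
    HasPeriodOn u m p L' := by
  intro i
  induction i using Nat.strong_induction_on with
  | _ i ih =>
    intro hmi hiL'
    by_cases hiL : i + p < L
    · exact per i hmi hiL
    · have e1 : u i = u (i - p') := by
        simpa [Nat.sub_add_cancel (show p' ≤ i by omega)] using
          per' (i - p') (by omega) (by omega)
      have e2 : u (i + p) = u (i - p' + p) := by
        simpa [show i - p' + p + p' = i + p by omega] using per' (i - p' + p) (by omega) (by omega)
      rw [e1, e2, ih (i - p') (by omega) (by omega) (by omega)]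

end Periods

section PeriodPropagation

variable {A : Type*} {σ : A → List A} {u : ℕ → A} {M : ℕ}
  (hpro : Prolongable σ (u 0)) (hfix : ∀ n, IsPrefOf (iterW σ n [u 0]) u)
  (hM : ∀ c, (σ c).length ≤ M)
include hpro hfix hM

theorem HasPeriodOn.exists_lt {m p L : ℕ} (per : HasPeriodOn u m p L) (hp : 0 < p)
    (hL : (M + 1) * (m + p) ≤ L) : ∃ L', L < L' ∧ HasPeriodOn u m p L' := by
  obtain ⟨X, Y, T, hpref, rfl, rfl, rfl, hT⟩ := per.exists_split (by nlinarith)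
  have hY : Y ≠ [] := List.length_pos_iff.1 hp
  have himage : mapW σ (X ++ (Y ++ T)) = mapW σ X ++ (mapW σ Y ++ mapW σ T) := by
    simp only [mapW_append]
  have hgrow := length_lt_length_mapW hpro hfix hpref (by simp [hY])
  rw [himage] at hgrow
  simp only [List.length_append] at hgrow
  have per' := hasPeriodOn_of_isPrefOf (himage ▸ isPrefOf_mapW hpro hfix hpref)
    (by simpa only [mapW_append] using mapW_prefix σ hT)
  have hX := length_le_length_mapW hpro hfix (hpref.of_prefix (List.prefix_append _ _))
  have hXM := length_mapW_le σ hM X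
  have hYM := length_mapW_le σ hM Y
  have hY' : 0 < (mapW σ Y).length := by
    refine List.length_pos_iff.2 fun hY0 => ?_
    have hT0 := mapW_eq_nil_of_subset σ (subset_of_prefix_append hY hT) hY0
    simp only [hY0, hT0, List.length_nil] at hgrow
    nlinarith
  exact ⟨_, hgrow, per.extend per' hY' hX (by nlinarith)⟩

theorem HasPeriodOn.eventually {m p L : ℕ} (per : HasPeriodOn u m p L) (hp : 0 < p)
    (hL : (M + 1) * (m + p) ≤ L) : ∀ i, m ≤ i → u (i + p) = u i := by
  have hext : ∀ k, ∃ L', L + k ≤ L' ∧ HasPeriodOn u m p L' := by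
    intro k
    induction k with
    | zero => exact ⟨L, le_rfl, per⟩
    | succ k ih =>
      obtain ⟨L₁, hL₁, per₁⟩ := ih
      obtain ⟨L₂, hL₂, per₂⟩ := per₁.exists_lt hpro hfix hM hp (hL.trans (by omega))
      exact ⟨L₂, by omega, per₂⟩
  intro i hi
  obtain ⟨L', hL', per'⟩ := hext (i + p + 1)
  exact per' i hi (by omega)

end PeriodPropagation

theorem fracPow_eq_append {A : Type*} (V : List A) {α : ℝ} (hα : 1 ≤ α) :
    ∃ T, fracPow V α = V ++ T ∧ T <+: V ++ T := by
  obtain ⟨k, hk⟩ : ∃ k, ⌊α⌋₊ = k + 1 :=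
    ⟨⌊α⌋₊ - 1, by have := (Nat.one_le_floor_iff α).2 hα; omega⟩
  set R := V.take ⌈Int.fract α * V.length⌉₊
  refine ⟨(List.replicate k V).flatten ++ R, ?_, ?_⟩
  · simp [fracPow, hk, List.replicate_succ, R]
  · have hrot : V ++ (List.replicate k V).flatten = (List.replicate k V).flatten ++ V := by
      rw [← List.flatten_cons, ← List.replicate_succ, List.replicate_succ', List.flatten_append,
        List.flatten_singleton]
    rw [← List.append_assoc, hrot, List.append_assoc, List.prefix_append_right_inj]
    exact (List.take_prefix _ V).trans (List.prefix_append _ _)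

/-- an aperiodic purely morphic word generated by a morphism `σ`
has Diophantine exponent at most `M + 1`, where `M = max |σ(i)|`. -/
theorem stmt_11 {A : Type*} [Fintype A] (σ : A → List A)
    (u : ℕ → A) (hpro : Prolongable σ (u 0))
    (hfix : ∀ n : ℕ, IsPrefOf (iterW σ n [u 0]) u)
    (haper : ¬ ∃ m p : ℕ, 1 ≤ p ∧ ∀ i : ℕ, m ≤ i → u (i + p) = u i)
    (M : ℕ) (hM : M = Finset.univ.sup fun c : A => (σ c).length) :
    dio u ≤ (((M : ℝ) + 1 : ℝ) : EReal) := by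
  have hσM : ∀ c, (σ c).length ≤ M := fun c =>
    hM ▸ Finset.le_sup (f := fun c => (σ c).length) (Finset.mem_univ c)
  refine sSup_le ?_
  rintro _ ⟨ρ, hρ, rfl⟩
  rw [EReal.coe_le_coe_iff]
  by_contra! hρM
  obtain ⟨U, V, α, hV, hα, hpref, -, hρle⟩ := hρ 0
  obtain ⟨T, hfp, hT⟩ := fracPow_eq_append V hα
  rw [hfp] at hpref hρle
  have hp : 0 < V.length := List.length_pos_iff.2 hV
  have hL : (M + 1) * (U.length + V.length) ≤ U.length + (V.length + T.length) := by
    have hpos : (0 : ℝ) < U.length + V.length := by positivity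
    rw [le_div_iff₀ hpos] at hρle
    simp only [List.length_append, Nat.cast_add] at hρle
    exact_mod_cast (by nlinarith : ((M : ℝ) + 1) * (U.length + V.length) ≤
      U.length + (V.length + T.length))
  exact haper ⟨U.length, V.length, hp,
    (hasPeriodOn_of_isPrefOf hpref hT).eventually hpro hfix hσM hp hL⟩
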